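/- Let a be an invertible symmetric real n×n matrix, η, b ∈ ℝⁿ, l = aη, γ = ηᵀaη, ε = bᵀη, ω = bᵀa⁻¹b, and σ₁, σ₂ real with 1 − σ₁γ ≠ 0 and τ := 1 + σ₂(ω + σ₁ε²/(1−σ₁γ)) ≠ 0. Then det(a − σ₁ l lᵀ + σ₂ b bᵀ) = τ·(1 − σ₁γ)·det(a). -/
import Mathlib


open Matrix

/-- Step 2: det(a − σ₁ l lᵀ + σ₂ b bᵀ) = τ (1 − σ₁γ) det a. -/
theorem stmt_18 {n : ℕ} (a : Matrix (Fin n) (Fin n) ℝ)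
    (hinv : IsUnit a.det) (hsym : a.IsSymm)
    (η b : Fin n → ℝ) (σ₁ σ₂ : ℝ)
    (l : Fin n → ℝ) (hl : l = a.mulVec η)
    (γ : ℝ) (hγ : γ = η ⬝ᵥ a.mulVec η)
    (ε : ℝ) (hε : ε = b ⬝ᵥ η)
    (ω : ℝ) (hω : ω = b ⬝ᵥ a⁻¹.mulVec b)
    (h : 1 - σ₁ * γ ≠ 0)
    (τ : ℝ) (hτ : τ = 1 + σ₂ * (ω + σ₁ * ε ^ 2 / (1 - σ₁ * γ)))
    (hτ0 : τ ≠ 0) :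
    (a - σ₁ • (Matrix.of fun i j => l i * l j)
        + σ₂ • (Matrix.of fun i j => b i * b j)).det
      = τ * (1 - σ₁ * γ) * a.det := by
  set U : Matrix (Fin n) (Fin 2) ℝ :=
    Matrix.of (fun i j => if j = 0 then -σ₁ * l i else σ₂ * b i) with hU
  set V : Matrix (Fin 2) (Fin n) ℝ :=
    Matrix.of (fun j i => if j = 0 then l i else b i) with hV
  have hM : a - σ₁ • (Matrix.of fun i j => l i * l j)
        + σ₂ • (Matrix.of fun i j => b i * b j) = a + U * V := by
    ext i j
    simp [hU, hV, Matrix.mul_apply, Fin.sum_univ_two, Matrix.add_apply,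
      Matrix.sub_apply, Matrix.smul_apply]
    ring
  have haη : a⁻¹.mulVec l = η := by
    rw [hl, Matrix.mulVec_mulVec, Matrix.nonsing_inv_mul a hinv, Matrix.one_mulVec]
  have hlil : l ⬝ᵥ a⁻¹.mulVec l = γ := by
    rw [haη, hl, hγ, dotProduct_comm]
  have hlib : l ⬝ᵥ a⁻¹.mulVec b = ε := by
    rw [hl, hε, Matrix.dotProduct_mulVec, ← Matrix.mulVec_transpose,
      Matrix.mulVec_mulVec, Matrix.transpose_nonsing_inv, hsym.eq,
      Matrix.nonsing_inv_mul a hinv, Matrix.one_mulVec, dotProduct_comm]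
  have hbil : b ⬝ᵥ a⁻¹.mulVec l = ε := by rw [haη, hε]
  have key : ∀ (c : ℝ) (v w : Fin n → ℝ),
      v ⬝ᵥ a⁻¹.mulVec (fun k => c * w k) = c * (v ⬝ᵥ a⁻¹.mulVec w) := by
    intro c v w
    have hw : (fun k => c * w k) = c • w := rfl
    rw [hw, Matrix.mulVec_smul, dotProduct_smul, smul_eq_mul]
  have keyneg : ∀ (c : ℝ) (v w : Fin n → ℝ),
      v ⬝ᵥ a⁻¹.mulVec (fun k => -(c * w k)) = -(c * (v ⬝ᵥ a⁻¹.mulVec w)) := by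
    intro c v w
    have hw : (fun k => -(c * w k)) = (-c) • w := by funext k; simp [neg_mul]
    rw [hw, Matrix.mulVec_smul, dotProduct_smul, smul_eq_mul]; ring
  rw [hM, Matrix.det_add_mul U V hinv]
  have hent : ∀ i j, (V * a⁻¹ * U) i j =
      (fun k => V i k) ⬝ᵥ a⁻¹.mulVec (fun k => U k j) := by
    intro i j
    rw [Matrix.mul_assoc, Matrix.mul_apply]
    simp [Matrix.mul_apply, dotProduct, Matrix.mulVec, dotProduct, Finset.mul_sum]
  have h2 : (1 + V * a⁻¹ * U) = !![1 - σ₁ * γ, σ₂ * ε; -σ₁ * ε, 1 + σ₂ * ω] := by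
    ext i j
    rw [Matrix.add_apply, hent i j]
    fin_cases i <;> fin_cases j <;>
      simp [hU, hV, key, keyneg, hlil, hlib, hbil, hω] <;> ring
  rw [h2, Matrix.det_fin_two_of, hτ]
  field_simp
  ring
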